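/- arXiv:2308.11110 — 7 statements merged into one kernel-verified Lean document; each statement's English description precedes it below -/
import Mathlib

section
/- Let R, R', R'' be K×K random-response matrices of the form R = a·I + b·U with a, b ≥ 0 and a + b = 1 (and similarly for R', R''), and suppose R · R'' = R'. Then for any deterministic surjective post-processor P with left inverse P†, we have R · P · (P† · R'' · P) = R' · P, and P† · R'' · P is row-stochastic; hence R · P is refined by R' · P. -/
noncomputable def unif (K : ℕ) : Matrix (Fin K) (Fin K) ℝ :=
  Matrix.of fun _ _ => (1 : ℝ) / K

def RowStochastic {X Y : Type*} [Fintype Y] (M : Matrix X Y ℝ) : Prop :=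
  (∀ x y, 0 ≤ M x y) ∧ ∀ x, ∑ y, M x y = 1

lemma RowStochastic.mul {X Y Z : Type*} [Fintype Y] [Fintype Z]
    {M : Matrix X Y ℝ} {N : Matrix Y Z ℝ}
    (hM : RowStochastic M) (hN : RowStochastic N) : RowStochastic (M * N) := by
  constructor
  · intro x z
    exact Finset.sum_nonneg fun y _ => mul_nonneg (hM.1 x y) (hN.1 y z)
  · intro x
    simp only [Matrix.mul_apply]
    rw [Finset.sum_comm]
    simp [← Finset.mul_sum, hN.2, hM.2 x]

/-- Stability of random response under deterministic post-processing:
if `R · R'' = R'` for random-response matrices, and `P` is a deterministic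
surjective post-processor with row-stochastic left inverse `P†`, then
`P† · R'' · P` is a row-stochastic witness for `R · P ⊑ R' · P`. -/
theorem random_response_stable {K m : ℕ}
    (a b a' b' a'' b'' : ℝ)
    (ha : 0 ≤ a) (hb : 0 ≤ b) (hab : a + b = 1)
    (ha' : 0 ≤ a') (hb' : 0 ≤ b') (hab' : a' + b' = 1)
    (ha'' : 0 ≤ a'') (hb'' : 0 ≤ b'') (hab'' : a'' + b'' = 1)
    (R R' R'' : Matrix (Fin K) (Fin K) ℝ)
    (hR : R = a • (1 : Matrix (Fin K) (Fin K) ℝ) + b • unif K)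
    (hR' : R' = a' • (1 : Matrix (Fin K) (Fin K) ℝ) + b' • unif K)
    (hR'' : R'' = a'' • (1 : Matrix (Fin K) (Fin K) ℝ) + b'' • unif K)
    (hrefine : R * R'' = R')
    (P : Matrix (Fin K) (Fin m) ℝ) (Pd : Matrix (Fin m) (Fin K) ℝ)
    (h01 : ∀ y z, P y z = 0 ∨ P y z = 1)
    (hrow : ∀ y, ∑ z, P y z = 1)
    (hsurj : ∀ z, ∃ y, P y z = 1)
    (hinv : Pd * P = 1) (hPd : RowStochastic Pd) :
    R * P * (Pd * R'' * P) = R' * P ∧ RowStochastic (Pd * R'' * P) ∧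
      ∃ X, RowStochastic X ∧ (R * P) * X = R' * P := by
  rcases Nat.eq_zero_or_pos K with hK0 | hK
  · subst hK0
    rcases Nat.eq_zero_or_pos m with hm | hm
    · subst hm
      refine ⟨by ext i j; exact i.elim0,
        ⟨fun x => x.elim0, fun x => x.elim0⟩,
        Pd * R'' * P, ⟨fun x => x.elim0, fun x => x.elim0⟩,
        by ext i j; exact i.elim0⟩
    · have h := hPd.2 (Fin.mk 0 hm)
      simp at h
  have hKne : (K : ℝ) ≠ 0 := Nat.cast_ne_zero.mpr hK.ne'
  -- basic facts about the uniform matrix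
  have hUU : unif K * unif K = unif K := by
    ext i j
    simp only [Matrix.mul_apply, unif, Matrix.of_apply, Finset.sum_const,
      Finset.card_univ, Fintype.card_fin, nsmul_eq_mul]
    field_simp
  have hRU : R * unif K = unif K := by
    rw [hR, Matrix.add_mul, Matrix.smul_mul, Matrix.smul_mul, Matrix.one_mul,
      hUU, ← add_smul, hab, one_smul]
  have hProw : RowStochastic P := by
    refine ⟨fun y z => ?_, hrow⟩
    rcases h01 y z with h | h <;> simp [h]
  have hPPdrow : ∀ i, ∑ k, (P * Pd) i k = 1 := (hProw.mul hPd).2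
  have hPPdU : (P * Pd) * unif K = unif K := by
    ext i j
    rw [Matrix.mul_apply]
    simp only [unif, Matrix.of_apply]
    rw [← Finset.sum_mul, hPPdrow i, one_mul]
  -- R'' is row stochastic
  have hR''rs : RowStochastic R'' := by
    constructor
    · intro i j
      rw [hR'']
      simp only [Matrix.add_apply, Matrix.smul_apply, Matrix.one_apply, unif,
        Matrix.of_apply, smul_eq_mul]
      have h1 : (0:ℝ) ≤ a'' * (if i = j then (1:ℝ) else 0) := by
        split <;> simp [ha'']
      have h2 : (0:ℝ) ≤ b'' * (1 / K) := by positivity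
      linarith
    · intro i
      rw [hR'']
      simp only [Matrix.add_apply, Matrix.smul_apply, Matrix.one_apply, unif,
        Matrix.of_apply, smul_eq_mul, Finset.sum_add_distrib, ← Finset.mul_sum,
        Finset.sum_ite_eq, Finset.mem_univ, if_true, Finset.sum_const,
        Finset.card_univ, Fintype.card_fin, nsmul_eq_mul]
      field_simp
      linarith [hab'']
  have hrs : RowStochastic (Pd * R'' * P) := (hPd.mul hR''rs).mul hProw
  -- key computation
  have hmid : R * P * (Pd * unif K * P) = unif K * P := by
    rw [Matrix.mul_assoc R P, ← Matrix.mul_assoc P (Pd * unif K) P,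
      ← Matrix.mul_assoc P Pd (unif K), hPPdU, ← Matrix.mul_assoc, hRU]
  have hPdRP : Pd * R'' * P = a'' • (1 : Matrix (Fin m) (Fin m) ℝ)
      + b'' • (Pd * unif K * P) := by
    rw [hR'', Matrix.mul_add, Matrix.mul_smul, Matrix.mul_smul, Matrix.mul_one,
      Matrix.add_mul, Matrix.smul_mul, Matrix.smul_mul, hinv]
  have hRR'' : R * R'' = a'' • R + b'' • unif K := by
    rw [hR'', Matrix.mul_add, Matrix.mul_smul, Matrix.mul_smul, Matrix.mul_one, hRU]
  have hR'P : R' * P = a'' • (R * P) + b'' • (unif K * P) := by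
    rw [← hrefine, hRR'', Matrix.add_mul, Matrix.smul_mul, Matrix.smul_mul]
  have key : R * P * (Pd * R'' * P) = R' * P := by
    rw [hPdRP, Matrix.mul_add, Matrix.mul_smul, Matrix.mul_smul, Matrix.mul_one,
      hmid, hR'P]
  exact ⟨key, hrs, Pd * R'' * P, hrs, key⟩
end

section
/- Let P be a deterministic 0/1 matrix representing a surjective function with left inverse P†, and let W be any matrix. Then P ⊑ W·P (i.e., there exists a row-stochastic X with P·X = W·P) if and only if P · P† · W · P = W · P, provided W·P is row-stochastic and P† is row-stochastic. -/
lemma rowStochastic_mul {X Y Z : Type*} [Fintype Y] [Fintype Z]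
    {A : Matrix X Y ℝ} {B : Matrix Y Z ℝ}
    (hA : RowStochastic A) (hB : RowStochastic B) : RowStochastic (A * B) := by
  constructor
  · intro x z
    exact Finset.sum_nonneg fun y _ => mul_nonneg (hA.1 x y) (hB.1 y z)
  · intro x
    simp only [Matrix.mul_apply]
    rw [Finset.sum_comm]
    calc ∑ y, ∑ z, A x y * B y z = ∑ y, A x y * ∑ z, B y z := by
          simp [Finset.mul_sum]
      _ = 1 := by simp [hB.2, hA.2 x]

/-- Structural characterisation of refinement `P ⊑ W·P` for a deterministic
surjective post-processor `P` with row-stochastic left inverse `P†`: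
a row-stochastic witness exists iff `P · P† · W · P = W · P`. -/
theorem refinement_iff_stability_equation
    {Y Z : Type*} [Fintype Y] [Fintype Z] [DecidableEq Z]
    (P : Matrix Y Z ℝ) (Pd : Matrix Z Y ℝ) (W : Matrix Y Y ℝ)
    (h01 : ∀ y z, P y z = 0 ∨ P y z = 1)
    (hrow : ∀ y, ∑ z, P y z = 1)
    (hsurj : ∀ z, ∃ y, P y z = 1)
    (hinv : Pd * P = 1) (hPd : RowStochastic Pd)
    (hWP : RowStochastic (W * P)) :
    (∃ X : Matrix Z Z ℝ, RowStochastic X ∧ P * X = W * P) ↔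
      P * Pd * W * P = W * P := by
  constructor
  · rintro ⟨X, _, hX⟩
    calc P * Pd * W * P = P * Pd * (W * P) := by rw [Matrix.mul_assoc]
      _ = P * Pd * (P * X) := by rw [hX]
      _ = P * (Pd * P) * X := by rw [Matrix.mul_assoc, Matrix.mul_assoc, Matrix.mul_assoc]
      _ = P * X := by rw [hinv, Matrix.mul_one]
      _ = W * P := hX
  · intro h
    refine ⟨Pd * (W * P), rowStochastic_mul hPd hWP, ?_⟩
    calc P * (Pd * (W * P)) = P * Pd * W * P := by
          rw [← Matrix.mul_assoc, ← Matrix.mul_assoc]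
      _ = W * P := h
end

section
/- Let C be a 2×2 row-stochastic matrix with rows (a,b) and (c,d), and let Y be the tally matrix mapping each Boolean N-tuple to its count of 'true' entries. Then for any N-tuple s with exactly k trues, the entry (C^{⊗N} · Y)_{s,m} equals the coefficient of t^m in the polynomial (a·t + b)^k · (c·t + d)^{N−k}; in particular (C^{⊗N} · Y)_{s,−} depends on s only through its count of trues. -/
open Polynomial

def kronPow {X Y : Type*} (A : Matrix X Y ℝ) (N : ℕ) :
    Matrix (Fin N → X) (Fin N → Y) ℝ :=
  Matrix.of fun v u => ∏ i, A (v i) (u i)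

/-- The number of `true` entries of a Boolean tuple. -/
def countTrue {N : ℕ} (s : Fin N → Bool) : ℕ :=
  (Finset.univ.filter fun i => s i = true).card

/-- The tally matrix, mapping a Boolean `N`-tuple to its count of trues. -/
noncomputable def tally (N : ℕ) : Matrix (Fin N → Bool) (Fin (N + 1)) ℝ :=
  Matrix.of fun s n => if countTrue s = (n : ℕ) then 1 else 0

lemma prod_bool_split {N : ℕ} (s : Fin N → Bool) {α : Type*} [CommMonoid α] (P : Bool → α) :
    ∏ i, P (s i) = P true ^ countTrue s * P false ^ (N - countTrue s) := by
  rw [← Finset.prod_filter_mul_prod_filter_not Finset.univ (fun i => s i = true)]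
  have hc : (Finset.univ.filter (fun i => ¬ s i = true)).card = N - countTrue s := by
    have := Finset.card_filter_add_card_filter_not (s := (Finset.univ : Finset (Fin N)))
      (p := fun i => s i = true)
    simp only [Finset.card_univ, Fintype.card_fin] at this
    unfold countTrue; omega
  have e1 : ∏ x ∈ Finset.univ.filter (fun i => s i = true), P (s x)
      = P true ^ countTrue s := by
    rw [Finset.prod_congr rfl (g := fun _ => P true)
      (fun i hi => by simp only [Finset.mem_filter] at hi; rw [hi.2]), Finset.prod_const]
    rfl
  have e2 : ∏ x ∈ Finset.univ.filter (fun i => ¬ s i = true), P (s x)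
      = P false ^ (N - countTrue s) := by
    rw [Finset.prod_congr rfl (g := fun _ => P false)
      (fun i hi => by
        simp only [Finset.mem_filter, Bool.not_eq_true] at hi; rw [hi.2]),
      Finset.prod_const, hc]
  rw [e1, e2]

/-- The rows of `C^{⊗N} · Y` are given by coefficients of
`(a·t+b)^k (c·t+d)^{N-k}`, where `k` is the number of trues of the input tuple;
in particular they depend on the input only through its count of trues. -/
theorem kronPow_tally_coeff {N : ℕ}
    (M : Matrix Bool Bool ℝ)
    (hM : (∀ x y, 0 ≤ M x y) ∧ ∀ x, ∑ y, M x y = 1) :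
    (∀ (s : Fin N → Bool) (m : Fin (N + 1)),
      (kronPow M N * tally N) s m =
        ((Polynomial.C (M true true) * Polynomial.X + Polynomial.C (M true false)) ^ countTrue s *
         (Polynomial.C (M false true) * Polynomial.X + Polynomial.C (M false false)) ^ (N - countTrue s)).coeff
          (m : ℕ)) ∧
    (∀ s s' : Fin N → Bool, countTrue s = countTrue s' →
      (kronPow M N * tally N) s = (kronPow M N * tally N) s') := by
  have main : ∀ (s : Fin N → Bool) (m : Fin (N + 1)),
      (kronPow M N * tally N) s m =
        ((C (M true true) * X + C (M true false)) ^ countTrue s *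
         (C (M false true) * X + C (M false false)) ^ (N - countTrue s)).coeff (m : ℕ) := by
    intro s m
    rw [← prod_bool_split s (fun x => C (M x true) * X + C (M x false))]
    rw [Finset.prod_add, Polynomial.finset_sum_coeff, Matrix.mul_apply]
    simp only [kronPow, tally, Matrix.of_apply, mul_ite, mul_one, mul_zero]
    refine Finset.sum_nbij' (i := fun u => Finset.univ.filter (fun i => u i = true))
      (j := fun t => fun i => decide (i ∈ t)) ?_ ?_ ?_ ?_ ?_
    · intro u _; simp
    · intro t _; simp
    · intro u _
      funext i
      simp
    · intro t _
      ext i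
      simp
    · intro u _
      have h1 : ∏ i ∈ Finset.univ.filter (fun i => u i = true), (C (M (s i) true) * X)
          = C (∏ i ∈ Finset.univ.filter (fun i => u i = true), M (s i) true)
            * X ^ (Finset.univ.filter (fun i => u i = true)).card := by
        rw [Finset.prod_mul_distrib, Finset.prod_const, map_prod]
      rw [h1]
      have h2 : ∏ i ∈ Finset.univ \ Finset.univ.filter (fun i => u i = true), C (M (s i) false)
          = C (∏ i ∈ Finset.univ \ Finset.univ.filter (fun i => u i = true), M (s i) false) := by
        rw [map_prod]
      rw [h2]
      rw [mul_right_comm, ← map_mul, Polynomial.coeff_C_mul, Polynomial.coeff_X_pow]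
      by_cases hc : countTrue u = (m : ℕ)
      · rw [if_pos hc]
        have : ((m : ℕ) = (Finset.univ.filter (fun i => u i = true)).card) := hc.symm
        rw [if_pos this, mul_one]
        rw [← Finset.prod_filter_mul_prod_filter_not Finset.univ (fun i => u i = true)]
        congr 1
        · exact Finset.prod_congr rfl (fun i hi => by
            simp only [Finset.mem_filter] at hi; rw [hi.2])
        · rw [Finset.filter_not]
          exact Finset.prod_congr rfl (fun i hi => by
            simp only [Finset.mem_sdiff, Finset.mem_filter, Bool.not_eq_true] at hi
            have := hi.2; rw [show u i = false by simpa using fun h => this ⟨hi.1, h⟩])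
      · rw [if_neg hc, if_neg (fun h => hc h.symm), mul_zero]
  exact ⟨main, fun s s' h => by
    funext m
    rw [main s m, main s' m, h]⟩
end

section
/- Let C be a 2×2 row-stochastic matrix, Y the tally matrix on Bool^N counting trues, and Y† any left inverse of Y that is row-stochastic and supported on representatives of tally-classes. Then Y · Y† · C^{⊗N} · Y = C^{⊗N} · Y. -/
theorem countTrue_eq_card_subtype {N : ℕ} (s : Fin N → Bool) :
    countTrue s = Fintype.card {i // s i = true} :=
  (Fintype.card_subtype _).symm

def countTrueFin {N : ℕ} (s : Fin N → Bool) : Fin (N + 1) :=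
  ⟨countTrue s, Nat.lt_succ_of_le ((Finset.card_filter_le _ _).trans_eq (Finset.card_fin N))⟩

theorem countTrue_comp_perm {N : ℕ} (s : Fin N → Bool) (σ : Equiv.Perm (Fin N)) :
    countTrue (s ∘ σ) = countTrue s := by
  simp only [countTrue_eq_card_subtype]
  exact Fintype.card_congr (σ.subtypeEquiv fun _ => Iff.rfl)

theorem card_subtype_eq_of_countTrue_eq {N : ℕ} {s t : Fin N → Bool}
    (h : countTrue s = countTrue t) (b : Bool) :
    Fintype.card {i // s i = b} = Fintype.card {i // t i = b} := by
  cases b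
  · simp only [Bool.eq_false_iff, Fintype.card_subtype_compl, ← countTrue_eq_card_subtype, h]
  · simpa only [countTrue_eq_card_subtype] using h

theorem exists_perm_of_countTrue_eq {N : ℕ} {s t : Fin N → Bool}
    (h : countTrue s = countTrue t) : ∃ σ : Equiv.Perm (Fin N), s = t ∘ σ :=
  ⟨Equiv.ofFiberEquiv fun b => Fintype.equivOfCardEq (card_subtype_eq_of_countTrue_eq h b),
    funext fun i => (Equiv.ofFiberEquiv_map _ i).symm⟩

theorem kronPow_comp_perm {X Y : Type*} (A : Matrix X Y ℝ) {N : ℕ} (σ : Equiv.Perm (Fin N))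
    (v : Fin N → X) (u : Fin N → Y) :
    kronPow A N (v ∘ σ) (u ∘ σ) = kronPow A N v u :=
  Equiv.prod_comp σ fun i => A (v i) (u i)

theorem tally_comp_perm {N : ℕ} (σ : Equiv.Perm (Fin N)) (u : Fin N → Bool) :
    tally N (u ∘ σ) = tally N u := by
  ext n
  simp only [tally, Matrix.of_apply, countTrue_comp_perm]

theorem kronPow_mul_tally_comp_perm {X : Type*} (A : Matrix X Bool ℝ) {N : ℕ}
    (σ : Equiv.Perm (Fin N)) (v : Fin N → X) :
    (kronPow A N * tally N) (v ∘ σ) = (kronPow A N * tally N) v := by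
  ext n
  simp only [Matrix.mul_apply]
  rw [← (σ.symm.arrowCongr (Equiv.refl Bool)).sum_comp]
  refine Finset.sum_congr rfl fun u _ => ?_
  change kronPow A N (v ∘ σ) (u ∘ σ) * tally N (u ∘ σ) n = _
  rw [kronPow_comp_perm, tally_comp_perm]

theorem kronPow_mul_tally_row_eq {N : ℕ} (A : Matrix Bool Bool ℝ) {s t : Fin N → Bool}
    (h : countTrue s = countTrue t) :
    (kronPow A N * tally N) s = (kronPow A N * tally N) t := by
  obtain ⟨σ, rfl⟩ := exists_perm_of_countTrue_eq h
  exact kronPow_mul_tally_comp_perm A σ t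

theorem tally_mul_apply {N : ℕ} {Z : Type*} (M : Matrix (Fin (N + 1)) Z ℝ)
    (s : Fin N → Bool) (z : Z) : (tally N * M) s z = M (countTrueFin s) z := by
  rw [Matrix.mul_apply, Fintype.sum_eq_single (countTrueFin s)]
  · simp [tally, countTrueFin]
  · intro n hn
    have hsn : countTrue s ≠ n := fun h => hn (Fin.ext h.symm)
    simp [tally, hsn]

theorem tally_absorption_general {N : ℕ}
    (C : Matrix Bool Bool ℝ)
    (Yd : Matrix (Fin (N + 1)) (Fin N → Bool) ℝ)
    (hYd : RowStochastic Yd)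
    (hsupp : ∀ (n : Fin (N + 1)) (s : Fin N → Bool), Yd n s ≠ 0 → countTrue s = (n : ℕ)) :
    tally N * Yd * kronPow C N * tally N = kronPow C N * tally N := by
  ext s n
  rw [Matrix.mul_assoc, Matrix.mul_assoc, tally_mul_apply, Matrix.mul_apply]
  calc ∑ u, Yd (countTrueFin s) u * (kronPow C N * tally N) u n
      = ∑ u, Yd (countTrueFin s) u * (kronPow C N * tally N) s n := by
        refine Finset.sum_congr rfl fun u _ => ?_
        by_cases hu : Yd (countTrueFin s) u = 0
        · rw [hu, zero_mul, zero_mul]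
        · rw [kronPow_mul_tally_row_eq C (hsupp _ u hu)]
    _ = (kronPow C N * tally N) s n := by
        rw [← Finset.sum_mul, hYd.2, one_mul]

/-- Tally absorption: for a 2×2 channel `C` and any row-stochastic left inverse
`Y†` of the tally `Y` supported on tally-classes, `Y · Y† · C^{⊗N} · Y = C^{⊗N} · Y`. -/
theorem tally_absorption {N : ℕ}
    (C : Matrix Bool Bool ℝ) (hC : RowStochastic C)
    (Yd : Matrix (Fin (N + 1)) (Fin N → Bool) ℝ)
    (hYdY : Yd * tally N = 1)
    (hYd : RowStochastic Yd)
    (hsupp : ∀ (n : Fin (N + 1)) (s : Fin N → Bool), Yd n s ≠ 0 → countTrue s = (n : ℕ)) :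
    tally N * Yd * kronPow C N * tally N = kronPow C N * tally N :=
  tally_absorption_general C Yd hYd hsupp
end

section
/- Post-processing cannot decrease posterior uncertainty (data-processing inequality for Bayesian utility): for any channel C : Matrix X Y ℝ, row-stochastic post-processor P : Matrix Y Z ℝ, prior π on X, and loss function ℓ : X × W → ℝ≥0 (W finite), the posterior uncertainty U_ℓ(π, C·P) ≥ U_ℓ(π, C), where U_ℓ(π, M) = ∑_y min_w ∑_x π_x · M_{x,y} · ℓ(x,w). -/
/-- The posterior ℓ-uncertainty of a channel `M` wrt. prior `π` and loss `ℓ`. -/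
noncomputable def uncert {X O W : Type*} [Fintype X] [Fintype O] [Fintype W] [Nonempty W]
    (π : X → ℝ) (ℓ : X → W → ℝ) (M : Matrix X O ℝ) : ℝ :=
  ∑ o, Finset.univ.inf' Finset.univ_nonempty (fun w => ∑ x, π x * M x o * ℓ x w)

/-- Data-processing inequality for Bayesian utility: post-processing cannot
decrease posterior uncertainty. -/
theorem dpi_uncertainty
    {X Y Z W : Type*} [Fintype X] [Fintype Y] [Fintype Z] [Fintype W]
    [Nonempty X] [Nonempty Y] [Nonempty Z] [Nonempty W]
    (C : Matrix X Y ℝ) (P : Matrix Y Z ℝ)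
    (hC : RowStochastic C) (hP : RowStochastic P)
    (π : X → ℝ) (hπ0 : ∀ x, 0 ≤ π x) (hπ1 : ∑ x, π x = 1)
    (ℓ : X → W → ℝ) (hℓ : ∀ x w, 0 ≤ ℓ x w) :
    uncert π ℓ C ≤ uncert π ℓ (C * P) := by
  unfold uncert
  -- g y = min_w ∑_x π x * C x y * ℓ x w
  set g : Y → ℝ := fun y =>
    Finset.univ.inf' Finset.univ_nonempty (fun w => ∑ x, π x * C x y * ℓ x w) with hg
  have key : ∀ z : Z, ∑ y, P y z * g y ≤
      Finset.univ.inf' Finset.univ_nonempty (fun w => ∑ x, π x * (C * P) x z * ℓ x w) := by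
    intro z
    apply Finset.le_inf'
    intro w _
    have hrw : (∑ x, π x * (C * P) x z * ℓ x w)
        = ∑ y, P y z * ∑ x, π x * C x y * ℓ x w := by
      simp only [Matrix.mul_apply, Finset.sum_mul, Finset.mul_sum]
      rw [Finset.sum_comm]
      congr 1; ext y; congr 1; ext x; ring
    rw [hrw]
    apply Finset.sum_le_sum
    intro y _
    exact mul_le_mul_of_nonneg_left
      (Finset.inf'_le _ (Finset.mem_univ w)) (hP.1 y z)
  calc ∑ y, g y = ∑ y, (∑ z, P y z) * g y := by
        simp [hP.2]
    _ = ∑ z, ∑ y, P y z * g y := by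
        rw [Finset.sum_comm]
        congr 1; ext y; rw [Finset.sum_mul]
    _ ≤ _ := Finset.sum_le_sum fun z _ => key z
end

section
/- Refinement implies dominance of posterior uncertainty: if C, C' are row-stochastic channels on a finite input X and C · W = C' for some row-stochastic W, then for every prior π and every loss function ℓ, U_ℓ(π, C) ≤ U_ℓ(π, C'), where U_ℓ(π, M) = ∑_y min_w ∑_x π_x · M_{x,y} · ℓ(x,w). -/
/-- Refinement implies dominance of posterior uncertainty (soundness half of
the Coriaceous theorem). -/
theorem refinement_le_uncertainty
    {X Y Z W : Type*} [Fintype X] [Fintype Y] [Fintype Z] [Fintype W]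
    [Nonempty X] [Nonempty Y] [Nonempty Z] [Nonempty W]
    (C : Matrix X Y ℝ) (Wit : Matrix Y Z ℝ) (C' : Matrix X Z ℝ)
    (hC : RowStochastic C) (hWit : RowStochastic Wit) (hC' : RowStochastic C')
    (href : C * Wit = C')
    (π : X → ℝ) (hπ0 : ∀ x, 0 ≤ π x) (hπ1 : ∑ x, π x = 1)
    (ℓ : X → W → ℝ) (hℓ : ∀ x w, 0 ≤ ℓ x w) :
    uncert π ℓ C ≤ uncert π ℓ C' := by
  classical
  set g : Y → W → ℝ := fun y w => ∑ x, π x * C x y * ℓ x w with hg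
  have key : ∀ z w, ∑ x, π x * C' x z * ℓ x w = ∑ y, Wit y z * g y w := by
    intro z w
    rw [← href]
    simp only [Matrix.mul_apply, hg, Finset.mul_sum, Finset.sum_mul]
    rw [Finset.sum_comm]
    congr 1; ext y; congr 1; ext x; ring
  have huncC' : uncert π ℓ C' =
      ∑ z, Finset.univ.inf' Finset.univ_nonempty (fun w => ∑ y, Wit y z * g y w) := by
    unfold uncert
    congr 1; ext z; congr 1; ext w; exact key z w
  rw [huncC']
  unfold uncert
  calc ∑ y, Finset.univ.inf' Finset.univ_nonempty (fun w => g y w)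
      = ∑ y, ∑ z, Wit y z * Finset.univ.inf' Finset.univ_nonempty (fun w => g y w) := by
        congr 1; ext y
        rw [← Finset.sum_mul, hWit.2 y, one_mul]
    _ = ∑ z, ∑ y, Wit y z * Finset.univ.inf' Finset.univ_nonempty (fun w => g y w) :=
        Finset.sum_comm
    _ ≤ ∑ z, Finset.univ.inf' Finset.univ_nonempty (fun w => ∑ y, Wit y z * g y w) := by
        apply Finset.sum_le_sum
        intro z _
        apply Finset.le_inf'
        intro w _
        apply Finset.sum_le_sum
        intro y _
        exact mul_le_mul_of_nonneg_left
          (Finset.inf'_le _ (Finset.mem_univ w)) (hWit.1 y z)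
end

section
/- Let T = B^{⊗N} · Y be a counting query built from a Boolean aggregator B : Matrix K Bool ℝ (deterministic, surjective, with left inverse B†) and the tally Y on Bool^N, and let W be a K×K matrix satisfying the single-step stability equation B · B† · W · B = W · B. Then, assuming the tally absorption property Y · Y† · D^{⊗N} · Y = D^{⊗N} · Y holds for the 2×2 row-stochastic matrix D = B† · W · B, we have T · T† · W^{⊗N} · T = W^{⊗N} · T, where T† = Y† · (B†)^{⊗N}. -/
lemma kronPow_mul {X Y Z : Type*} [Fintype Y] [DecidableEq Y]
    (A : Matrix X Y ℝ) (C : Matrix Y Z ℝ) (N : ℕ) :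
    kronPow (A * C) N = kronPow A N * kronPow C N := by
  ext v u
  simp only [kronPow, Matrix.of_apply, Matrix.mul_apply, Fintype.prod_sum,
    Finset.prod_mul_distrib]

/-- Stability lifts to counting queries `T = B^{⊗N} · Y`: if the single-step
stability equation `B · B† · W · B = W · B` holds and the tally absorption
property holds for `D = B† · W · B`, then
`T · T† · W^{⊗N} · T = W^{⊗N} · T` where `T† = Y† · (B†)^{⊗N}`. -/
theorem counting_query_stability
    {K : Type*} [Fintype K] [DecidableEq K] {N : ℕ}
    (B : Matrix K Bool ℝ) (Bd : Matrix Bool K ℝ)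
    (h01 : ∀ k b, B k b = 0 ∨ B k b = 1)
    (hrowB : ∀ k, ∑ b, B k b = 1)
    (hsurjB : ∀ b, ∃ k, B k b = 1)
    (hBdB : Bd * B = 1) (hBd : RowStochastic Bd)
    (Yd : Matrix (Fin (N + 1)) (Fin N → Bool) ℝ)
    (hYdY : Yd * tally N = 1)
    (W : Matrix K K ℝ)
    (hstep : B * Bd * W * B = W * B)
    (hD : RowStochastic (Bd * W * B))
    (habsorb : tally N * Yd * kronPow (Bd * W * B) N * tally N =
      kronPow (Bd * W * B) N * tally N) :
    (kronPow B N * tally N) * (Yd * kronPow Bd N) * kronPow W N *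
        (kronPow B N * tally N) =
      kronPow W N * (kronPow B N * tally N) := by
  have hs := congrArg (fun M => kronPow M N * tally N) hstep
  simp only [kronPow_mul, Matrix.mul_assoc] at hs habsorb ⊢
  rw [habsorb, hs]
end
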